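/- Under the setup below, let U : ℝ → (Fin nV → ℝ) be a differentiable solution of the semi-discrete scheme, i.e. U_t(t) = 𝒟(t) U(t) + L(t) ( ℬ(t) U(t) − G(t) ) + F(t), where U_t(t) := U'(t) − D_m(t)U(t) + (1/2) g(t) ⊙ U(t) and L(t) = diag(𝒫(t))⁻¹ δ(t)ᵀ diag(P) is the discrete lifting operator. Then the discrete energy satisfies for all t: d/dt [ U(t)ᵀ diag(𝒫(t)) U(t) ] = 2 U(t)ᵀ diag(𝒫(t)) 𝒟(t) U(t) + 2 (δ(t)U(t))ᵀ diag(P) ( ℬ(t)U(t) − G(t) ) + 2 U(t)ᵀ diag(𝒫(t)) F(t) + (EU(t))ᵀ diag(P) diag(W(t)) (EU(t)). -/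

import Mathlib

open Matrix

/-!
Differentiating the energy `Uᵀ diag(𝒫) U` gives `2 Uᵀ diag(𝒫) U' + Uᵀ diag(g ⊙ 𝒫) U`, since
`𝒫' = g ⊙ 𝒫`. Substituting `U'` from the scheme, the `½ g ⊙ U` correction cancels the
metric term, the mesh-velocity term `2 Uᵀ diag(𝒫) D_m U` becomes the boundary quadratic form by
the SBP property (`diag(𝒫)` is symmetric), and `diag(𝒫) L = δᵀ diag(P)` turns the penalty into a
surface term.
-/

section Energy

variable {n : Type*} [Fintype n] [DecidableEq n]

theorem hasDerivAt_dotProduct_diagonal_mulVec {u w : ℝ → n → ℝ} {u' w' : n → ℝ} {t : ℝ}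
    (hu : HasDerivAt u u' t) (hw : HasDerivAt w w' t) :
    HasDerivAt (fun s => u s ⬝ᵥ (diagonal (w s) *ᵥ u s))
      (2 * (u t ⬝ᵥ (diagonal (w t) *ᵥ u')) + u t ⬝ᵥ (diagonal w' *ᵥ u t)) t := by
  have hterm (i : n) : HasDerivAt (fun s => u s i * (w s i * u s i))
      (u' i * (w t i * u t i) + u t i * (w' i * u t i + w t i * u' i)) t :=
    (hasDerivAt_pi.mp hu i).mul ((hasDerivAt_pi.mp hw i).mul (hasDerivAt_pi.mp hu i))
  have henergy : (fun s => u s ⬝ᵥ (diagonal (w s) *ᵥ u s))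
      = fun s => ∑ i, u s i * (w s i * u s i) := by
    funext s
    simp only [dotProduct, mulVec_diagonal]
  rw [henergy]
  refine (HasDerivAt.fun_sum fun i _ => hterm i).congr_deriv ?_
  simp only [dotProduct, mulVec_diagonal, Finset.mul_sum, ← Finset.sum_add_distrib]
  exact Finset.sum_congr rfl fun i _ => by ring

end Energy

section QuadraticForm

variable {R : Type*} [CommRing R] {n m : Type*} [Fintype n] [Fintype m]

theorem dotProduct_transpose_mul_mulVec (E : Matrix m n R) (Q : Matrix m m R) (u : n → R) :
    u ⬝ᵥ ((Eᵀ * Q * E) *ᵥ u) = (E *ᵥ u) ⬝ᵥ (Q *ᵥ (E *ᵥ u)) := by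
  rw [← mulVec_mulVec, ← mulVec_mulVec, dotProduct_mulVec, vecMul_transpose]

theorem two_mul_dotProduct_mulVec_of_add_transpose_mul {M D Q : Matrix n n R}
    (hM : Mᵀ = M) (hMD : M * D + Dᵀ * M = Q) (u : n → R) :
    2 * (u ⬝ᵥ (M *ᵥ (D *ᵥ u))) = u ⬝ᵥ (Q *ᵥ u) := by
  have hsymm : u ⬝ᵥ ((Dᵀ * M) *ᵥ u) = u ⬝ᵥ (M *ᵥ (D *ᵥ u)) := by
    rw [← mulVec_mulVec, dotProduct_mulVec, vecMul_transpose, dotProduct_comm (D *ᵥ u),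
      dotProduct_mulVec u M, ← mulVec_transpose, hM]
  rw [← hMD, add_mulVec, dotProduct_add, hsymm, ← mulVec_mulVec]
  ring

variable [DecidableEq n]

theorem dotProduct_mulVec_lift {M : Matrix n n R} (hM : IsUnit M.det) (A : Matrix m n R)
    (B : Matrix m m R) (u : n → R) (x : m → R) :
    u ⬝ᵥ (M *ᵥ ((M⁻¹ * Aᵀ * B) *ᵥ x)) = (A *ᵥ u) ⬝ᵥ (B *ᵥ x) := by
  rw [mulVec_mulVec, ← Matrix.mul_assoc, ← Matrix.mul_assoc, mul_nonsing_inv M hM,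
    Matrix.one_mul, ← mulVec_mulVec, dotProduct_mulVec, vecMul_transpose]

theorem dotProduct_diagonal_mulVec_mul (u v w x : n → R) :
    u ⬝ᵥ (diagonal w *ᵥ (v * x)) = u ⬝ᵥ (diagonal (v * w) *ᵥ x) := by
  simp only [dotProduct, mulVec_diagonal, Pi.mul_apply]
  exact Finset.sum_congr rfl fun i _ => by ring

end QuadraticForm

theorem stmt5_general (nV nS : ℕ)
    (E : Matrix (Fin nS) (Fin nV) ℝ)
    (Psurf : Fin nS → ℝ)
    (Pref : Fin nV → ℝ) (hPref : ∀ i, 0 < Pref i)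
    (g J : ℝ → Fin nV → ℝ) (hJpos : ∀ (t : ℝ) (i : Fin nV), 0 < J t i)
    (hJ : ∀ (t : ℝ) (i : Fin nV), HasDerivAt (fun s => J s i) (g t i * J t i) t)
    (Pvol : ℝ → Fin nV → ℝ) (hPvol : ∀ t : ℝ, Pvol t = J t * Pref)
    (Dm : ℝ → Matrix (Fin nV) (Fin nV) ℝ) (W : ℝ → Fin nS → ℝ)
    (hSBP : ∀ t : ℝ, Matrix.diagonal (Pvol t) * Dm t + (Dm t)ᵀ * Matrix.diagonal (Pvol t)
      = Eᵀ * Matrix.diagonal Psurf * Matrix.diagonal (W t) * E)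
    (𝒟 : ℝ → Matrix (Fin nV) (Fin nV) ℝ)
    (ℬ δ : ℝ → Matrix (Fin nS) (Fin nV) ℝ)
    (G : ℝ → Fin nS → ℝ) (F : ℝ → Fin nV → ℝ)
    (L : ℝ → Matrix (Fin nV) (Fin nS) ℝ)
    (hL : ∀ t : ℝ, L t = (Matrix.diagonal (Pvol t))⁻¹ * (δ t)ᵀ * Matrix.diagonal Psurf)
    (U U' : ℝ → Fin nV → ℝ) (hU : ∀ t : ℝ, HasDerivAt U (U' t) t)
    (Ut : ℝ → Fin nV → ℝ)
    (hUt : ∀ t : ℝ, Ut t = U' t - Dm t *ᵥ U t + (1 / 2 : ℝ) • (g t * U t))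
    (hscheme : ∀ t : ℝ, Ut t = 𝒟 t *ᵥ U t + L t *ᵥ (ℬ t *ᵥ U t - G t) + F t) :
    ∀ t : ℝ, HasDerivAt (fun s => U s ⬝ᵥ (Matrix.diagonal (Pvol s) *ᵥ U s))
      (2 * (U t ⬝ᵥ (Matrix.diagonal (Pvol t) *ᵥ (𝒟 t *ᵥ U t)))
        + 2 * ((δ t *ᵥ U t) ⬝ᵥ (Matrix.diagonal Psurf *ᵥ (ℬ t *ᵥ U t - G t)))
        + 2 * (U t ⬝ᵥ (Matrix.diagonal (Pvol t) *ᵥ F t))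
        + (E *ᵥ U t) ⬝ᵥ (Matrix.diagonal Psurf *ᵥ (Matrix.diagonal (W t) *ᵥ (E *ᵥ U t)))) t := by
  intro t
  have hPvol_deriv : HasDerivAt Pvol (g t * Pvol t) t := by
    rw [show Pvol = fun s => J s * Pref from funext hPvol]
    exact hasDerivAt_pi.mpr fun i => by simpa [mul_assoc] using (hJ t i).mul_const (Pref i)
  have hdet : IsUnit (diagonal (Pvol t)).det := by
    rw [det_diagonal, hPvol t]
    exact (Finset.prod_pos fun i _ => mul_pos (hJpos t i) (hPref i)).ne'.isUnit
  have hU' : U' t = 𝒟 t *ᵥ U t + L t *ᵥ (ℬ t *ᵥ U t - G t) + F t + Dm t *ᵥ U t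
      - (1 / 2 : ℝ) • (g t * U t) := by
    rw [← hscheme t, hUt t]; abel
  have hsbp := two_mul_dotProduct_mulVec_of_add_transpose_mul (diagonal_transpose _) (hSBP t) (U t)
  rw [Matrix.mul_assoc Eᵀ, dotProduct_transpose_mul_mulVec, ← mulVec_mulVec] at hsbp
  refine (hasDerivAt_dotProduct_diagonal_mulVec (hU t) hPvol_deriv).congr_deriv ?_
  rw [hU', hL t]
  simp only [mulVec_add, mulVec_sub, mulVec_smul, dotProduct_add, dotProduct_sub,
    dotProduct_smul, smul_eq_mul]
  rw [dotProduct_mulVec_lift hdet, dotProduct_mulVec_lift hdet, ← hsbp,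
    dotProduct_diagonal_mulVec_mul]
  ring

/-- The discrete energy identity (3.16) of the paper, for a differentiable solution
of the semi-discrete SBP–SAT scheme with lifting operator
`L(t) = diag(𝒫(t))⁻¹ δ(t)ᵀ diag(P)`. -/
theorem stmt5 (nV nS : ℕ) (hnV : 0 < nV) (hnS : 0 < nS)
    (σ : Fin nS → Fin nV) (hσ : Function.Injective σ)
    (E : Matrix (Fin nS) (Fin nV) ℝ)
    (hE : ∀ (k : Fin nS) (j : Fin nV), E k j = if j = σ k then 1 else 0)
    (Psurf : Fin nS → ℝ) (hPsurf : ∀ k, 0 < Psurf k)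
    (Pref : Fin nV → ℝ) (hPref : ∀ i, 0 < Pref i)
    (g J : ℝ → Fin nV → ℝ) (hJpos : ∀ (t : ℝ) (i : Fin nV), 0 < J t i)
    (hJ : ∀ (t : ℝ) (i : Fin nV), HasDerivAt (fun s => J s i) (g t i * J t i) t)
    (Pvol : ℝ → Fin nV → ℝ) (hPvol : ∀ t : ℝ, Pvol t = J t * Pref)
    (Dm : ℝ → Matrix (Fin nV) (Fin nV) ℝ) (W : ℝ → Fin nS → ℝ)
    (hSBP : ∀ t : ℝ, Matrix.diagonal (Pvol t) * Dm t + (Dm t)ᵀ * Matrix.diagonal (Pvol t)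
      = Eᵀ * Matrix.diagonal Psurf * Matrix.diagonal (W t) * E)
    (𝒟 : ℝ → Matrix (Fin nV) (Fin nV) ℝ)
    (ℬ δ : ℝ → Matrix (Fin nS) (Fin nV) ℝ)
    (G : ℝ → Fin nS → ℝ) (F : ℝ → Fin nV → ℝ)
    (L : ℝ → Matrix (Fin nV) (Fin nS) ℝ)
    (hL : ∀ t : ℝ, L t = (Matrix.diagonal (Pvol t))⁻¹ * (δ t)ᵀ * Matrix.diagonal Psurf)
    (U U' : ℝ → Fin nV → ℝ) (hU : ∀ t : ℝ, HasDerivAt U (U' t) t)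
    (Ut : ℝ → Fin nV → ℝ)
    (hUt : ∀ t : ℝ, Ut t = U' t - Dm t *ᵥ U t + (1 / 2 : ℝ) • (g t * U t))
    (hscheme : ∀ t : ℝ, Ut t = 𝒟 t *ᵥ U t + L t *ᵥ (ℬ t *ᵥ U t - G t) + F t) :
    ∀ t : ℝ, HasDerivAt (fun s => U s ⬝ᵥ (Matrix.diagonal (Pvol s) *ᵥ U s))
      (2 * (U t ⬝ᵥ (Matrix.diagonal (Pvol t) *ᵥ (𝒟 t *ᵥ U t)))
        + 2 * ((δ t *ᵥ U t) ⬝ᵥ (Matrix.diagonal Psurf *ᵥ (ℬ t *ᵥ U t - G t)))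
        + 2 * (U t ⬝ᵥ (Matrix.diagonal (Pvol t) *ᵥ F t))
        + (E *ᵥ U t) ⬝ᵥ (Matrix.diagonal Psurf *ᵥ (Matrix.diagonal (W t) *ᵥ (E *ᵥ U t)))) t :=
  stmt5_general nV nS E Psurf Pref hPref g J hJpos hJ Pvol hPvol Dm W hSBP 𝒟 ℬ δ G F L hL U U' hU Ut
    hUt hscheme
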